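/- arXiv:1702.05018 — 2 statements merged into one kernel-verified Lean document; each statement's English description precedes it below -/
import Mathlib

section
/- Let $x, x^* \in \mathbb{R}^2$ with $x^* \neq 0$ and $x \neq x^*$, and suppose $x$ does not lie on the closed segment from $0$ to $x^*$. Then the Lebesgue measure of $\mathcal{A} = B(x, |x-x^*|) \setminus \overline{B}(0, |x^*|)$ is strictly positive, i.e., $|\mathcal{A}| > 0$. -/
open MeasureTheory

/-- For `x` off the closed segment from `0` to `x^*` (and `x ≠ x^*`, `x^* ≠ 0`), the region
`B(x,|x-x^*|) \ closedBall(0,|x^*|)` has strictly positive Lebesgue measure. -/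
theorem off_segment_positive_area (xs x : EuclideanSpace ℝ (Fin 2))
    (hxs : xs ≠ 0) (hx : x ≠ xs)
    (hseg : x ∉ segment ℝ (0 : EuclideanSpace ℝ (Fin 2)) xs) :
    0 < volume (Metric.ball x ‖x - xs‖ \
      Metric.closedBall (0 : EuclideanSpace ℝ (Fin 2)) ‖xs‖) := by
  set r : ℝ := ‖x - xs‖ with hr
  set R : ℝ := ‖xs‖ with hR
  have hx0 : x ≠ 0 := by
    rintro rfl; exact hseg (left_mem_segment ℝ _ _)
  have hxnorm : 0 < ‖x‖ := norm_pos_iff.mpr hx0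
  have hrpos : 0 < r := by
    simpa [hr, sub_eq_zero] using hx
  -- strict triangle inequality
  have htri : R < ‖x‖ + r := by
    have hle : R ≤ ‖x‖ + r := by
      have h := norm_sub_le x (x - xs)
      simpa [hR, hr] using h
    rcases lt_or_eq_of_le hle with h | h
    · exact h
    · exfalso
      apply hseg
      rw [mem_segment_iff_wbtw, ← dist_add_dist_eq_iff]
      simp only [dist_zero_left, dist_eq_norm]
      rw [hR, hr] at h
      simp only [zero_sub, norm_neg]
      linarith
  -- choose a witness point
  set t : ℝ := max ((R - ‖x‖ + r) / 2) (r / 2) with ht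
  have htpos : 0 < t := lt_of_lt_of_le (by linarith) (le_max_right _ _)
  have htlt : t < r := by
    apply max_lt <;> linarith
  have htgt : R - ‖x‖ < t := lt_of_lt_of_le (by linarith) (le_max_left _ _)
  set y : EuclideanSpace ℝ (Fin 2) := x + (t / ‖x‖) • x with hy
  have hyx : y - x = (t / ‖x‖) • x := by rw [hy]; abel
  have hdyx : ‖y - x‖ = t := by
    rw [hyx, norm_smul, Real.norm_eq_abs, abs_of_pos (div_pos htpos hxnorm)]
    field_simp
  have hynorm : ‖y‖ = ‖x‖ + t := by
    have : y = (1 + t / ‖x‖) • x := by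
      rw [hy, add_smul, one_smul]
    rw [this, norm_smul, Real.norm_eq_abs,
      abs_of_pos (by positivity : (0:ℝ) < 1 + t / ‖x‖)]
    field_simp
  have hmem : y ∈ Metric.ball x r \ Metric.closedBall (0 : EuclideanSpace ℝ (Fin 2)) R := by
    constructor
    · rw [Metric.mem_ball, dist_eq_norm, hdyx]; exact htlt
    · rw [Metric.mem_closedBall, dist_zero_right, hynorm]
      push_neg
      linarith
  have hopen : IsOpen (Metric.ball x r \ Metric.closedBall (0 : EuclideanSpace ℝ (Fin 2)) R) :=
    Metric.isOpen_ball.sdiff Metric.isClosed_closedBall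
  exact hopen.measure_pos volume ⟨y, hmem⟩
end

section
/- Define $g(\theta) = q\pi + (-1)^q \arccos(\sin\theta) + \cos\theta \sin\theta$ for $\theta \in [-\pi, \pi)$, where $q = 1$ if $\theta \in (-\pi/2, \pi/2)$ and $q = 0$ otherwise. Then $\frac{1}{2\pi}\int_{-\pi}^{\pi} g(\theta)\, d\theta = \frac{\pi}{2}$. -/
/-!
Since `arccos (-x) = π - arccos x`, the branch condition is symmetric in `θ` and `cos θ sin θ` is
odd, the integrand `g` satisfies `g θ + g (-θ) = π` for every `θ`. Reflecting `θ ↦ -θ` then shows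
`2 ∫_{-π}^{π} g = 2π · π`.
-/

open Real intervalIntegral MeasureTheory

theorem intervalIntegral.integral_symm_eq_smul_of_add_comp_neg {E : Type*} [NormedAddCommGroup E]
    [NormedSpace ℝ E] [CompleteSpace E] {f : ℝ → E} {a : ℝ} {c : E}
    (hf : IntervalIntegrable f volume (-a) a) (h : ∀ x ∈ Set.uIcc (-a) a, f x + f (-x) = c) :
    ∫ x in (-a)..a, f x = a • c := by
  have hreflect : ∫ x in (-a)..a, f x = (2 * a) • c - ∫ x in (-a)..a, f x := by
    calc ∫ x in (-a)..a, f x = ∫ x in (-a)..a, f (-x) := by rw [integral_comp_neg, neg_neg]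
      _ = ∫ x in (-a)..a, (c - f x) :=
          integral_congr fun x hx => eq_sub_of_add_eq' (h x hx)
      _ = (2 * a) • c - ∫ x in (-a)..a, f x := by
          rw [integral_sub intervalIntegrable_const hf, integral_const, sub_neg_eq_add, two_mul]
  have htwice : (2 : ℝ) • ∫ x in (-a)..a, f x = (2 : ℝ) • (a • c) := by
    rw [two_smul, smul_smul]
    exact eq_sub_iff_add_eq.mp hreflect
  exact smul_right_injective E two_ne_zero htwice

noncomputable def angularIntegrand (θ : ℝ) : ℝ :=
  if -(π/2) < θ ∧ θ < π/2
    then π - Real.arccos (Real.sin θ) + Real.cos θ * Real.sin θ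
    else Real.arccos (Real.sin θ) + Real.cos θ * Real.sin θ

theorem angularIntegrand_add_neg (θ : ℝ) : angularIntegrand θ + angularIntegrand (-θ) = π := by
  have hsymm : (-(π/2) < -θ ∧ -θ < π/2) ↔ (-(π/2) < θ ∧ θ < π/2) := by
    constructor <;> rintro ⟨h₁, h₂⟩ <;> constructor <;> linarith
  unfold angularIntegrand
  rw [if_congr hsymm rfl rfl, Real.sin_neg, Real.cos_neg, Real.arccos_neg]
  split_ifs <;> ring

theorem measurable_angularIntegrand : Measurable angularIntegrand :=
  Measurable.ite measurableSet_Ioo (by fun_prop) (by fun_prop)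

theorem abs_angularIntegrand_le (θ : ℝ) : |angularIntegrand θ| ≤ π + 1 := by
  have harccos_nonneg := Real.arccos_nonneg (Real.sin θ)
  have harccos_le := Real.arccos_le_pi (Real.sin θ)
  have hcos_sin : |Real.cos θ * Real.sin θ| ≤ 1 := by
    rw [abs_mul]
    exact mul_le_one₀ (abs_cos_le_one θ) (abs_nonneg _) (abs_sin_le_one θ)
  rw [abs_le] at hcos_sin ⊢
  unfold angularIntegrand
  split_ifs <;> constructor <;> linarith [hcos_sin.1, hcos_sin.2]

theorem intervalIntegrable_angularIntegrand (a b : ℝ) :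
    IntervalIntegrable angularIntegrand volume a b :=
  (intervalIntegrable_const (c := π + 1)).mono_fun'
    measurable_angularIntegrand.aestronglyMeasurable
    (Filter.Eventually.of_forall abs_angularIntegrand_le)

/-- The angular average in the proof of Proposition 4: with
`g(θ) = qπ + (-1)^q arccos(sin θ) + cos θ sin θ`, `q = 1` on `(-π/2, π/2)` and `q = 0`
otherwise, one has `(1/2π) ∫_{-π}^{π} g(θ) dθ = π/2`. -/
theorem angular_average_pi_div_two :
    (1/(2*π)) * ∫ θ in (-π)..π,
        (if -(π/2) < θ ∧ θ < π/2
          then π - Real.arccos (Real.sin θ) + Real.cos θ * Real.sin θ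
          else Real.arccos (Real.sin θ) + Real.cos θ * Real.sin θ)
      = π / 2 := by
  change (1/(2*π)) * ∫ θ in (-π)..π, angularIntegrand θ = π / 2
  rw [integral_symm_eq_smul_of_add_comp_neg (intervalIntegrable_angularIntegrand _ _)
    fun θ _ => angularIntegrand_add_neg θ, smul_eq_mul]
  field_simp
end
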